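/- arXiv:1910.04284 — 4 statements merged into one kernel-verified Lean document; each statement's English description precedes it below -/
import Mathlib

section
/- Let F = f_k ∘ ⋯ ∘ f_1 and F̂ = f̂_k ∘ ⋯ ∘ f̂_1 be two compositions of functions between normed spaces, where the perturbed output F(x, δ) is defined recursively by h_1(x,δ) = f_1(x) + δ_1‖x‖, h_i(x,δ) = f_i(h_{i-1}(x,δ)) + δ_i‖h_{i-1}(x,δ)‖, and the all-layer margin m_F(x,y) is the minimum of √(Σ_i ‖δ_i‖²) over all perturbations δ = (δ_1,…,δ_k) causing F(x,δ) to misclassify (x,y). Then for any input-label pair (x,y), |m_F(x,y) − m_{F̂}(x,y)| ≤ √(Σ_{i=1}^k ⦀f_i − f̂_i⦀²), where ⦀g⦀ = sup_{x≠0} ‖g(x)‖/‖x‖. -/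
open scoped BigOperators

/-- Perturbed forward pass: `h_0 = x`, `h_{i+1} = f_i(h_i) + ‖h_i‖ • δ_i`. -/
noncomputable def perturbed {D : ℕ → Type*} [∀ i, NormedAddCommGroup (D i)]
    [∀ i, NormedSpace ℝ (D i)]
    (f : ∀ i, D i → D (i + 1)) (δ : ∀ i, D (i + 1)) (x : D 0) : ∀ i, D i
  | 0 => x
  | (i + 1) => f i (perturbed f δ x i) + ‖perturbed f δ x i‖ • δ i

/-- The set of values `√(Σ_i ‖δ_i‖²)` over perturbations `δ` that cause the
perturbed network output to misclassify `(x, y)` (argmax of the output ≠ y). -/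
noncomputable def marginSet {k l : ℕ} {D : ℕ → Type*} [∀ i, NormedAddCommGroup (D i)]
    [∀ i, NormedSpace ℝ (D i)]
    (f : ∀ i, D i → D (i + 1)) (e : D k ≃ₗᵢ[ℝ] EuclideanSpace ℝ (Fin l))
    (x : D 0) (y : Fin l) : Set ℝ :=
  {r | ∃ δ : ∀ i, D (i + 1),
        (∃ y' : Fin l, y' ≠ y ∧
          e (perturbed f δ x k) y ≤ e (perturbed f δ x k) y') ∧
        r = Real.sqrt (∑ i : Fin k, ‖δ (i : ℕ)‖ ^ 2)}

/-!
If `f̂` misclassifies `x` under a perturbation `δ`, then `f` misclassifies it under the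
perturbation that additionally absorbs the layer error at every hidden activation `h_i`, namely
`δ_i + ‖h_i‖⁻¹ • (f̂_i h_i - f_i h_i)`: with it, the forward pass of `f` retraces that of `f̂`
exactly. The extra term has norm at most `⦀f_i - f̂_i⦀`, so by Minkowski's inequality the cost of
the new perturbation exceeds the old one by at most `√(Σ_i ⦀f_i - f̂_i⦀²)`. Hence
`m_F ≤ m_F̂ + √(Σ_i ⦀f_i - f̂_i⦀²)`, and symmetrically.
-/

theorem Real.sqrt_sum_norm_add_sq_le {ι : Type*} [Fintype ι] {E : ι → Type*}
    [∀ i, SeminormedAddCommGroup (E i)] (u v : ∀ i, E i) :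
    √(∑ i, ‖u i + v i‖ ^ 2) ≤ √(∑ i, ‖u i‖ ^ 2) + √(∑ i, ‖v i‖ ^ 2) := by
  simpa only [PiLp.norm_eq_of_L2, WithLp.ofLp_add, WithLp.ofLp_toLp, Pi.add_apply]
    using norm_add_le (WithLp.toLp 2 u) (WithLp.toLp 2 v)

theorem norm_inv_norm_smul_le_abs {E F : Type*} [SeminormedAddCommGroup E]
    [SeminormedAddCommGroup F] [NormedSpace ℝ F] {a : E} {v : F} {c : ℝ}
    (hv : ‖v‖ ≤ c * ‖a‖) : ‖‖a‖⁻¹ • v‖ ≤ |c| := by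
  rw [norm_smul, norm_inv, norm_norm]
  rcases (norm_nonneg a).eq_or_lt with ha | ha
  · simp [← ha]
  · rw [inv_mul_le_iff₀ ha, mul_comm]
    exact hv.trans (by gcongr; exact le_abs_self c)

section Perturbation

variable {D : ℕ → Type*} [∀ i, NormedAddCommGroup (D i)] [∀ i, NormedSpace ℝ (D i)]

noncomputable def layerCorrection (f g : ∀ i, D i → D (i + 1)) (h : ∀ i, D i) (i : ℕ) :
    D (i + 1) :=
  ‖h i‖⁻¹ • (g i (h i) - f i (h i))

theorem perturbed_add_layerCorrection (f g : ∀ i, D i → D (i + 1)) (δ : ∀ i, D (i + 1))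
    (x : D 0) {n : ℕ} (hzero : ∀ i < n, f i 0 = g i 0) :
    ∀ i ≤ n, perturbed f (δ + layerCorrection f g (perturbed g δ x)) x i =
      perturbed g δ x i := by
  intro i
  induction i with
  | zero => intro _; rfl
  | succ i ih =>
    intro hi
    set a := perturbed g δ x i
    change f i (perturbed f _ x i) + ‖perturbed f _ x i‖ • (δ i + ‖a‖⁻¹ • (g i a - f i a)) =
      g i a + ‖a‖ • δ i
    rw [ih (by omega)]
    by_cases ha : a = 0
    -- at a zero activation the correction is `0⁻¹ • _ = 0`, so the layers must agree at `0`
    · simp [ha, hzero i hi]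
    · rw [smul_add, smul_smul, mul_inv_cancel₀ (norm_ne_zero_iff.mpr ha), one_smul]
      abel

variable {k l : ℕ}

theorem exists_mem_marginSet_le (f g : ∀ i, D i → D (i + 1))
    (e : D k ≃ₗᵢ[ℝ] EuclideanSpace ℝ (Fin l)) (C : Fin k → ℝ)
    (hC : ∀ (i : Fin k) (h : D i), ‖f i h - g i h‖ ≤ C i * ‖h‖) {x : D 0} {y : Fin l} {r : ℝ}
    (hr : r ∈ marginSet g e x y) :
    ∃ r' ∈ marginSet f e x y, r' ≤ r + √(∑ i : Fin k, C i ^ 2) := by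
  obtain ⟨δ, hmis, rfl⟩ := hr
  set c := layerCorrection f g (perturbed g δ x)
  have hzero : ∀ i < k, f i 0 = g i 0 := fun i hi => by
    simpa [sub_eq_zero] using hC ⟨i, hi⟩ 0
  have hc : ∀ i : Fin k, ‖c i‖ ≤ |C i| := fun i =>
    norm_inv_norm_smul_le_abs (by rw [norm_sub_rev]; exact hC i _)
  refine ⟨_, ⟨δ + c, ?_, rfl⟩, ?_⟩
  · rwa [perturbed_add_layerCorrection f g δ x hzero k le_rfl]
  calc √(∑ i : Fin k, ‖(δ + c) i‖ ^ 2)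
      ≤ √(∑ i : Fin k, ‖δ i‖ ^ 2) + √(∑ i : Fin k, ‖c i‖ ^ 2) :=
        Real.sqrt_sum_norm_add_sq_le (fun i : Fin k => δ i) (fun i : Fin k => c i)
    _ ≤ √(∑ i : Fin k, ‖δ i‖ ^ 2) + √(∑ i : Fin k, |C i| ^ 2) := by
        gcongr with i
        exact hc i
    _ = √(∑ i : Fin k, ‖δ i‖ ^ 2) + √(∑ i : Fin k, C i ^ 2) := by simp only [sq_abs]

end Perturbation

/-- The all-layer margin is `√(Σ ⦀f_i − f̂_i⦀²)`-Lipschitz in the layers: for any two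
compositions `F, F̂` and any `(x,y)`, `|m_F(x,y) − m_{F̂}(x,y)| ≤ √(Σ_i ⦀f_i − f̂_i⦀²)`,
where `C i` bounds the operator-style norm `⦀f_i − f̂_i⦀` (i.e. `‖f_i h − f̂_i h‖ ≤ C i ‖h‖`),
and the minima defining the margins are assumed attained (`IsLeast`). -/
theorem allLayerMargin_lipschitz {k l : ℕ} {D : ℕ → Type*} [∀ i, NormedAddCommGroup (D i)]
    [∀ i, NormedSpace ℝ (D i)]
    (f fhat : ∀ i, D i → D (i + 1)) (e : D k ≃ₗᵢ[ℝ] EuclideanSpace ℝ (Fin l))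
    (C : Fin k → ℝ)
    (hC : ∀ (i : Fin k) (h : D i), ‖f i h - fhat i h‖ ≤ C i * ‖h‖)
    (x : D 0) (y : Fin l) (mF mFhat : ℝ)
    (hmF : IsLeast (marginSet f e x y) mF)
    (hmFhat : IsLeast (marginSet fhat e x y) mFhat) :
    |mF - mFhat| ≤ Real.sqrt (∑ i : Fin k, C i ^ 2) := by
  rw [abs_sub_le_iff]
  constructor
  · obtain ⟨r, hr, hle⟩ := exists_mem_marginSet_le f fhat e C hC hmFhat.1
    linarith [hmF.2 hr]
  · have hC' : ∀ (i : Fin k) (h : D i), ‖fhat i h - f i h‖ ≤ C i * ‖h‖ := fun i h => by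
      rw [norm_sub_rev]; exact hC i h
    obtain ⟨r, hr, hle⟩ := exists_mem_marginSet_le fhat f e C hC' hmF.1
    linarith [hmFhat.2 hr]
end

section
/- Let F_1,…,F_k be function classes each satisfying log N_{⦀·⦀}(ε, F_i) ≤ ⌊C_i²/ε²⌋ for all ε > 0. Fix weights α_i > 0 and p ≥ 1, and on sequences F = (f_1,…,f_k) define the norm ⦀F⦀_α = ‖(α_1⦀f_1⦀,…,α_k⦀f_k⦀)‖_p. Define C_α = (Σ_i α_i^{2p/(p+2)} C_i^{2p/(p+2)})^{(p+2)/(2p)}. Then for all ε > 0, the covering number of the product class F = F_1 × ⋯ × F_k in the norm ⦀·⦀_α satisfies log N(ε, F) ≤ ⌊C_α²/ε²⌋. -/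
/-!
Cover each class `F_i` at its own scale `δ_i` and take the product of the covers: the product
`δ`-cover has log-cardinality at most `∑ ⌊C_i² / δ_i²⌋`. With `q = 2p/(p+2)`, i.e.
`1/q = 1/p + 1/2`, and `a_i = α_i C_i`, the choice `α_i δ_i = ε (a_i / ‖a‖_q)^{q/p}` makes
`∑ (α_i δ_i)^p = ε^p` and `∑ C_i² / δ_i² = ‖a‖_q² / ε²`, and `‖a‖_q = C_α`.
Classes with `C_i = 0` have covers of size one at every positive scale, hence at scale `0`.
-/

open Finset Real Filter Topology

section OpCovers

variable {E V : Type*} [Norm E] [SeminormedAddCommGroup V]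

/-- `T` is an `r`-cover of `F` for the operator seminorm `⦀f⦀ = sup_x ‖f x‖ / ‖x‖`. -/
def OpCovers (F : Set (E → V)) (T : Finset (E → V)) (r : ℝ) : Prop :=
  ∀ g ∈ F, ∃ ĝ ∈ T, ∀ x, ‖g x - ĝ x‖ ≤ r * ‖x‖

theorem OpCovers.exists_zero_of_card_le_one {F : Set (E → V)}
    (h : ∀ η > 0, ∃ T : Finset (E → V), OpCovers F T η ∧ T.card ≤ 1) :
    ∃ T : Finset (E → V), OpCovers F T 0 ∧ T.card ≤ 1 := by
  rcases F.eq_empty_or_nonempty with rfl | ⟨g₀, hg₀⟩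
  · exact ⟨∅, fun g hg => hg.elim, by simp⟩
  refine ⟨{g₀}, fun g hg => ⟨g₀, mem_singleton_self g₀, fun x => ?_⟩, (card_singleton g₀).le⟩
  have h_close : ∀ η > 0, ‖g x - g₀ x‖ ≤ η * ‖x‖ := by
    intro η hη
    obtain ⟨T, hT, hcard⟩ := h (η / 2) (half_pos hη)
    obtain ⟨ĝ, hĝ, hgĝ⟩ := hT g hg
    obtain ⟨ĝ₀, hĝ₀, hg₀ĝ₀⟩ := hT g₀ hg₀
    obtain rfl : ĝ = ĝ₀ := card_le_one.mp hcard _ hĝ _ hĝ₀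
    calc ‖g x - g₀ x‖ ≤ ‖g x - ĝ x‖ + ‖g₀ x - ĝ x‖ := by
          simpa only [norm_sub_rev (ĝ x)] using norm_sub_le_norm_sub_add_norm_sub _ (ĝ x) _
      _ ≤ η / 2 * ‖x‖ + η / 2 * ‖x‖ := add_le_add (hgĝ x) (hg₀ĝ₀ x)
      _ = η * ‖x‖ := by ring
  have h_lim : Tendsto (fun η : ℝ => η * ‖x‖) (𝓝[>] 0) (𝓝 (0 * ‖x‖)) :=
    ((continuous_id.mul continuous_const).tendsto 0).mono_left nhdsWithin_le_nhds
  exact ge_of_tendsto h_lim (eventually_nhdsWithin_of_forall h_close)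

theorem exists_opCovers_of_forall_pos {F : Set (E → V)} {C δ : ℝ}
    (hcov : ∀ η > 0, ∃ T : Finset (E → V),
      OpCovers F T η ∧ Real.log T.card ≤ (⌊C ^ 2 / η ^ 2⌋₊ : ℝ))
    (hδ : 0 ≤ δ) (hCδ : δ = 0 → C = 0) :
    ∃ T : Finset (E → V), OpCovers F T δ ∧ Real.log T.card ≤ (⌊C ^ 2 / δ ^ 2⌋₊ : ℝ) := by
  rcases hδ.lt_or_eq with hδ | rfl
  · exact hcov δ hδ
  obtain rfl := hCδ rfl
  have h_card : ∀ η > 0, ∃ T : Finset (E → V), OpCovers F T η ∧ T.card ≤ 1 := fun η hη =>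
    (hcov η hη).imp fun T ⟨hT, hlog⟩ =>
      ⟨hT, by exact_mod_cast (log_nonpos_iff T.card.cast_nonneg).mp (by simpa using hlog)⟩
  obtain ⟨T, hT, hcard⟩ := OpCovers.exists_zero_of_card_le_one h_card
  exact ⟨T, hT, by simpa using log_nonpos T.card.cast_nonneg (by exact_mod_cast hcard)⟩

end OpCovers

theorem log_card_piFinset_le_sum {ι : Type*} [DecidableEq ι] [Fintype ι] {β : ι → Type*}
    (T : ∀ i, Finset (β i)) :
    Real.log (Fintype.piFinset T).card ≤ ∑ i, Real.log (T i).card := by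
  rw [Fintype.card_piFinset, Nat.cast_prod]
  by_cases h : ∀ i, (T i).card ≠ 0
  · exact (log_prod fun i _ => Nat.cast_ne_zero.mpr (h i)).le
  · obtain ⟨i, hi⟩ := not_forall_not.mp h
    rw [prod_eq_zero (mem_univ i) (by simp [hi]), log_zero]
    exact sum_nonneg fun i _ => log_natCast_nonneg _

theorem sum_natFloor_le_natFloor {ι : Type*} {s : Finset ι} {x : ι → ℝ} {y : ℝ}
    (hx : ∀ i ∈ s, 0 ≤ x i) (h : ∑ i ∈ s, x i ≤ y) : ∑ i ∈ s, ⌊x i⌋₊ ≤ ⌊y⌋₊ :=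
  Nat.le_floor <| by
    push_cast
    exact (sum_le_sum fun i hi => Nat.floor_le (hx i hi)).trans h

section Scales

variable {ι : Type*} [Fintype ι] {a : ι → ℝ} {p q : ℝ}

theorem sum_rpow_div_rpow_sum_le_one (ha : ∀ i, 0 ≤ a i) (hq : 0 < q) :
    ∑ i, (a i / (∑ j, a j ^ q) ^ q⁻¹) ^ q ≤ 1 := by
  have hS : 0 ≤ ∑ j, a j ^ q := sum_nonneg fun j _ => rpow_nonneg (ha j) q
  simp_rw [div_rpow (ha _) (rpow_nonneg hS _), rpow_inv_rpow hS hq.ne', ← sum_div]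
  exact div_self_le_one _

theorem rpow_sum_inv_pos (ha : ∀ i, 0 ≤ a i) {i : ι} (hi : 0 < a i) :
    0 < (∑ j, a j ^ q) ^ q⁻¹ :=
  rpow_pos_of_pos ((rpow_pos_of_pos hi q).trans_le
    (single_le_sum (fun j _ => rpow_nonneg (ha j) q) (mem_univ i))) _

theorem sq_mul_div_mul_rpow (hp : 0 < p) (hpq : q⁻¹ = p⁻¹ + 2⁻¹) {b : ℝ} (hb : 0 < b)
    (N ε : ℝ) : (b * N / (ε * b ^ (q / p))) ^ 2 = (N / ε) ^ 2 * b ^ q := by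
  have hq : q ≠ 0 := (inv_pos.mp (hpq ▸ by positivity)).ne'
  have h_exp : (1 - q / p) * (2 : ℕ) = q := by
    field_simp at hpq ⊢
    push_cast
    linarith
  have hbq : b ^ q = (b ^ (1 - q / p)) ^ 2 := by rw [← rpow_mul_natCast hb.le, h_exp]
  rw [hbq, rpow_sub hb, rpow_one]
  ring

/-- The equality case of Hölder's inequality with `1/q = 1/p + 1/2`. -/
theorem exists_scales (ha : ∀ i, 0 ≤ a i) (hp : 0 < p) (hpq : q⁻¹ = p⁻¹ + 2⁻¹)
    {ε : ℝ} (hε : 0 < ε) :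
    ∃ s : ι → ℝ, (∀ i, 0 ≤ s i) ∧ (∀ i, s i = 0 → a i = 0) ∧
      ∑ i, s i ^ p ≤ ε ^ p ∧ ∑ i, (a i / s i) ^ 2 ≤ ((∑ i, a i ^ q) ^ q⁻¹ / ε) ^ 2 := by
  have hq : 0 < q := inv_pos.mp (hpq ▸ by positivity)
  set N := (∑ i, a i ^ q) ^ q⁻¹
  have hN : 0 ≤ N := rpow_nonneg (sum_nonneg fun j _ => rpow_nonneg (ha j) q) _
  have hb : ∀ i, 0 ≤ a i / N := fun i => div_nonneg (ha i) hN
  have h_normalized := sum_rpow_div_rpow_sum_le_one ha hq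
  refine ⟨fun i => ε * (a i / N) ^ (q / p), fun i => by have := hb i; positivity,
    fun i hi => ?_, ?_, ?_⟩
  · rw [mul_eq_zero, rpow_eq_zero (hb i) (by positivity), div_eq_zero_iff] at hi
    rcases hi with hε0 | ha0 | hN0
    · exact absurd hε0 hε.ne'
    · exact ha0
    · by_contra ha0
      exact (rpow_sum_inv_pos ha ((ha i).lt_of_ne' ha0)).ne' hN0
  · calc ∑ i, (ε * (a i / N) ^ (q / p)) ^ p = ε ^ p * ∑ i, (a i / N) ^ q := by
          rw [mul_sum]
          refine sum_congr rfl fun i _ => ?_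
          rw [mul_rpow hε.le (rpow_nonneg (hb i) _), ← rpow_mul (hb i), div_mul_cancel₀ q hp.ne']
      _ ≤ ε ^ p := mul_le_of_le_one_right (by positivity) h_normalized
  · calc ∑ i, (a i / (ε * (a i / N) ^ (q / p))) ^ 2 ≤ ∑ i, (N / ε) ^ 2 * (a i / N) ^ q := by
          refine sum_le_sum fun i _ => ?_
          rcases (ha i).eq_or_lt with ha0 | ha0
          · have := hb i
            rw [← ha0, zero_div, zero_pow two_ne_zero]
            positivity
          · have hN0 : 0 < N := rpow_sum_inv_pos ha ha0
            simpa only [div_mul_cancel₀ _ hN0.ne'] using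
              (sq_mul_div_mul_rpow hp hpq (div_pos ha0 hN0) N ε).le
      _ ≤ (N / ε) ^ 2 := by
          rw [← mul_sum]
          exact mul_le_of_le_one_right (by positivity) h_normalized

end Scales

/-- Covering of a product of layer classes in the weighted norm
`⦀F⦀_α = ‖(α_1⦀f_1⦀, …, α_k⦀f_k⦀)‖_p`: if `log N(ε, F_i) ≤ ⌊C_i²/ε²⌋` in the operator
norm for every `ε > 0`, then for every `ε > 0` the product class has an `ε`-cover in
`⦀·⦀_α` of log-cardinality at most `⌊C_α²/ε²⌋`, where
`C_α = (Σ_i α_i^{2p/(p+2)} C_i^{2p/(p+2)})^{(p+2)/(2p)}`. Here the bound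
`⦀f_i − g_i⦀ ≤ t_i` is encoded as `∀ x, ‖f_i x − g_i x‖ ≤ t_i ‖x‖`. -/
theorem productClass_cover {k : ℕ} {E V : Fin k → Type*}
    [∀ i, NormedAddCommGroup (E i)] [∀ i, NormedAddCommGroup (V i)]
    (Fc : ∀ i, Set (E i → V i)) (C : Fin k → ℝ) (hC : ∀ i, 0 ≤ C i)
    (α : Fin k → ℝ) (hα : ∀ i, 0 < α i) (p : ℝ) (hp : 1 ≤ p)
    (hcov : ∀ (i : Fin k) (εi : ℝ), 0 < εi →
      ∃ T : Finset (E i → V i),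
        (∀ g ∈ Fc i, ∃ ghat ∈ T, ∀ x, ‖g x - ghat x‖ ≤ εi * ‖x‖) ∧
        Real.log T.card ≤ (Nat.floor (C i ^ 2 / εi ^ 2) : ℝ)) :
    ∀ ε : ℝ, 0 < ε →
      ∃ G : Finset (∀ i, E i → V i),
        (∀ f : ∀ i, E i → V i, (∀ i, f i ∈ Fc i) →
          ∃ g ∈ G, ∃ t : Fin k → ℝ, (∀ i, 0 ≤ t i) ∧
            (∀ (i : Fin k) (x : E i), ‖f i x - g i x‖ ≤ t i * ‖x‖) ∧
            (∑ i, (α i * t i) ^ p) ^ (1 / p) ≤ ε) ∧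
        Real.log G.card ≤
          (Nat.floor (((∑ i, α i ^ (2 * p / (p + 2)) * C i ^ (2 * p / (p + 2))) ^
              ((p + 2) / (2 * p))) ^ (2 : ℕ) / ε ^ 2) : ℝ) := by
  intro ε hε
  have hp0 : 0 < p := by linarith
  have hpq : (2 * p / (p + 2))⁻¹ = p⁻¹ + 2⁻¹ := by field_simp; ring
  have ha : ∀ i, 0 ≤ α i * C i := fun i => mul_nonneg (hα i).le (hC i)
  obtain ⟨s, hs, hs_zero, hs_p, hs_sq⟩ := exists_scales ha hp0 hpq hε
  simp_rw [mul_rpow (hα _).le (hC _), inv_div] at hs_sq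
  set δ : Fin k → ℝ := fun i => s i / α i
  have hδ : ∀ i, 0 ≤ δ i := fun i => div_nonneg (hs i) (hα i).le
  have hαδ : ∀ i, α i * δ i = s i := fun i => mul_div_cancel₀ (s i) (hα i).ne'
  have hCδ : ∀ i, C i / δ i = α i * C i / s i := fun i => by rw [div_div_eq_mul_div, mul_comm]
  have hδ_zero : ∀ i, δ i = 0 → C i = 0 := fun i h => by
    simpa [(hα i).ne'] using hs_zero i (by simpa [δ, (hα i).ne'] using h)
  choose T hT hT_log using fun i => exists_opCovers_of_forall_pos (hcov i) (hδ i) (hδ_zero i)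
  refine ⟨Fintype.piFinset T, fun f hf => ?_, ?_⟩
  · choose g hg hfg using fun i => hT i (f i) (hf i)
    refine ⟨g, Fintype.mem_piFinset.2 hg, δ, hδ, hfg, ?_⟩
    rw [one_div, rpow_inv_le_iff_of_pos (sum_nonneg fun i _ =>
      rpow_nonneg (mul_nonneg (hα i).le (hδ i)) p)
      hε.le hp0]
    simpa only [hαδ] using hs_p
  · calc Real.log (Fintype.piFinset T).card ≤ ∑ i, Real.log (T i).card :=
          log_card_piFinset_le_sum T
      _ ≤ ∑ i, (⌊C i ^ 2 / δ i ^ 2⌋₊ : ℝ) := sum_le_sum fun i _ => hT_log i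
      _ ≤ _ := by
          rw [← Nat.cast_sum, Nat.cast_le, ← div_pow]
          refine sum_natFloor_le_natFloor (fun i _ => by positivity) ?_
          simpa only [← div_pow, hCδ] using hs_sq
end

section
/- Fix positive reals z_1,…,z_k, b_1,…,b_k and an integer q > 0. Define E(α) = Σ_i z_i^q/α_i^q + (Σ_i α_i^{2q/(3q−2)} b_i^{2q/(3q−2)})^{(3q−2)/q} over α ∈ (0,∞)^k. Then inf_α E(α) ≤ 2(Σ_i (z_i b_i)^{2/3})^{3q/(q+2)}. -/
/-!
Write `S = Σ_i (z_i b_i)^{2/3}` and `p = 3q/(q+2)`. Choose `α_i` so that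
`(z_i/α_i)^q = (z_i b_i)^{2/3} S^{p-1}`; then the first sum of `E(α)` is `S^p`, and the
exponents are such that every term `(α_i b_i)^{2q/(3q-2)}` of the second sum is again proportional
to `(z_i b_i)^{2/3}`, which makes the second summand of `E(α)` equal to `S^p` as well.
Hence `E(α) = 2 S^p` bounds the infimum. This `α` is the paper's witness without the factor
`(q/2)^{1/(q+2)}`, so the estimate `(q/2)^{2/(q+2)} + (q/2)^{-q/(q+2)} ≤ 2` is not needed.
-/

open Real Finset

noncomputable def balancedWeight (q c z b : ℝ) : ℝ :=
  z * ((z * b) ^ (2 / 3 : ℝ) * c) ^ (-q⁻¹)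

section balancedWeight

variable {q c z b : ℝ}

lemma balancedWeight_pos (hc : 0 < c) (hz : 0 < z) (hb : 0 < b) :
    0 < balancedWeight q c z b := by
  unfold balancedWeight; positivity

lemma div_balancedWeight_rpow (hq : q ≠ 0) (hc : 0 < c) (hz : 0 < z) (hb : 0 < b) :
    (z / balancedWeight q c z b) ^ q = (z * b) ^ (2 / 3 : ℝ) * c := by
  have ht : 0 < (z * b) ^ (2 / 3 : ℝ) * c := by positivity
  rw [balancedWeight, div_mul_cancel_left₀ hz.ne', rpow_neg ht.le, inv_inv,
    rpow_inv_rpow ht.le hq]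

lemma balancedWeight_mul_rpow (hq : 2 < 3 * q) (hc : 0 < c) (hz : 0 < z) (hb : 0 < b) :
    (balancedWeight q c z b * b) ^ (2 * q / (3 * q - 2)) =
      (z * b) ^ (2 / 3 : ℝ) * c ^ (-2 / (3 * q - 2)) := by
  set t := (z * b) ^ (2 / 3 : ℝ) with ht
  have htpos : 0 < t := by positivity
  have hzb : z * b = t ^ (3 / 2 : ℝ) := by
    rw [ht, ← rpow_mul (by positivity)]; norm_num
  have hq0 : q ≠ 0 := by rintro rfl; linarith
  have hd : 3 * q - 2 ≠ 0 := by intro h; linarith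
  rw [balancedWeight, mul_right_comm, ← ht]
  clear_value t
  rw [hzb, mul_rpow htpos.le hc.le, ← mul_assoc, ← rpow_add htpos,
    mul_rpow (by positivity) (by positivity), ← rpow_mul htpos.le, ← rpow_mul hc.le]
  have h1 : (3 / 2 + -q⁻¹) * (2 * q / (3 * q - 2)) = 1 := by field_simp; ring
  have h2 : -q⁻¹ * (2 * q / (3 * q - 2)) = -2 / (3 * q - 2) := by field_simp
  rw [h1, h2, rpow_one]

end balancedWeight

noncomputable def balancedWeights {ι : Type*} [Fintype ι] (q : ℝ) (z b : ι → ℝ) : ι → ℝ :=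
  fun i =>
    balancedWeight q ((∑ j, (z j * b j) ^ (2 / 3 : ℝ)) ^ ((2 * q - 2) / (q + 2))) (z i) (b i)

section balancedWeights

variable {ι : Type*} [Fintype ι] {q : ℝ} {z b : ι → ℝ}

lemma sum_mul_rpow_two_div_three_pos (hz : ∀ i, 0 < z i) (hb : ∀ i, 0 < b i) (i : ι) :
    0 < ∑ j, (z j * b j) ^ (2 / 3 : ℝ) :=
  sum_pos (fun j _ => by have := hz j; have := hb j; positivity) ⟨i, mem_univ i⟩

lemma balancedWeights_pos (hz : ∀ i, 0 < z i) (hb : ∀ i, 0 < b i) (i : ι) :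
    0 < balancedWeights q z b i :=
  balancedWeight_pos (rpow_pos_of_pos (sum_mul_rpow_two_div_three_pos hz hb i) _) (hz i) (hb i)

lemma sum_div_balancedWeights_rpow (hq : 2 < 3 * q) (hz : ∀ i, 0 < z i) (hb : ∀ i, 0 < b i) :
    ∑ i, (z i / balancedWeights q z b i) ^ q =
      (∑ i, (z i * b i) ^ (2 / 3 : ℝ)) ^ (3 * q / (q + 2)) := by
  set S := ∑ i, (z i * b i) ^ (2 / 3 : ℝ)
  have hS : 0 ≤ S := sum_nonneg fun i _ => by have := hz i; have := hb i; positivity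
  have hq0 : q ≠ 0 := by rintro rfl; linarith
  have hq2 : q + 2 ≠ 0 := by intro h; linarith
  calc ∑ i, (z i / balancedWeights q z b i) ^ q
      = ∑ i, (z i * b i) ^ (2 / 3 : ℝ) * S ^ ((2 * q - 2) / (q + 2)) :=
        sum_congr rfl fun i _ => div_balancedWeight_rpow hq0
          (rpow_pos_of_pos (sum_mul_rpow_two_div_three_pos hz hb i) _) (hz i) (hb i)
    _ = S ^ (3 * q / (q + 2)) := by
        have hp : 1 + (2 * q - 2) / (q + 2) = 3 * q / (q + 2) := by field_simp; ring
        rw [← sum_mul, ← rpow_one_add' hS (by rw [hp]; positivity), hp]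

lemma sum_balancedWeights_mul_rpow_rpow (hq : 2 < 3 * q) (hz : ∀ i, 0 < z i)
    (hb : ∀ i, 0 < b i) :
    (∑ i, (balancedWeights q z b i * b i) ^ (2 * q / (3 * q - 2))) ^ ((3 * q - 2) / q) =
      (∑ i, (z i * b i) ^ (2 / 3 : ℝ)) ^ (3 * q / (q + 2)) := by
  set S := ∑ i, (z i * b i) ^ (2 / 3 : ℝ)
  have hS : 0 ≤ S := sum_nonneg fun i _ => by have := hz i; have := hb i; positivity
  have hq0 : q ≠ 0 := by rintro rfl; linarith
  have hq2 : q + 2 ≠ 0 := by intro h; linarith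
  have hd : 3 * q - 2 ≠ 0 := by intro h; linarith
  have he : 1 + (2 * q - 2) / (q + 2) * (-2 / (3 * q - 2)) =
      3 * q ^ 2 / ((q + 2) * (3 * q - 2)) := by
    rw [div_mul_div_comm, one_add_div (mul_ne_zero hq2 hd)]
    ring
  have he0 : 3 * q ^ 2 / ((q + 2) * (3 * q - 2)) ≠ 0 := by
    have : 0 < 3 * q - 2 := by linarith
    have : 0 < q := by linarith
    positivity
  calc (∑ i, (balancedWeights q z b i * b i) ^ (2 * q / (3 * q - 2))) ^ ((3 * q - 2) / q)
      = (S * S ^ ((2 * q - 2) / (q + 2) * (-2 / (3 * q - 2)))) ^ ((3 * q - 2) / q) := by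
        rw [sum_mul]
        congr 1
        refine sum_congr rfl fun i _ => ?_
        rw [rpow_mul hS]
        exact balancedWeight_mul_rpow hq
          (rpow_pos_of_pos (sum_mul_rpow_two_div_three_pos hz hb i) _) (hz i) (hb i)
    _ = S ^ (3 * q / (q + 2)) := by
        rw [← rpow_one_add' hS (he ▸ he0), he, ← rpow_mul hS]
        congr 1
        field_simp

end balancedWeights

/-- For positive reals `z_i, b_i` and integer `q > 0`, the infimum over positive `α` of
`E(α) = Σ_i z_i^q/α_i^q + (Σ_i α_i^{2q/(3q−2)} b_i^{2q/(3q−2)})^{(3q−2)/q}`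
is at most `2 (Σ_i (z_i b_i)^{2/3})^{3q/(q+2)}`. -/
theorem inf_E_le {k : ℕ} (z b : Fin k → ℝ) (hz : ∀ i, 0 < z i) (hb : ∀ i, 0 < b i)
    (q : ℕ) (hq : 0 < q) :
    sInf {r : ℝ | ∃ α : Fin k → ℝ, (∀ i, 0 < α i) ∧
        r = (∑ i, z i ^ q / α i ^ q) +
          (∑ i, α i ^ (2 * (q : ℝ) / (3 * (q : ℝ) - 2)) *
            b i ^ (2 * (q : ℝ) / (3 * (q : ℝ) - 2))) ^ ((3 * (q : ℝ) - 2) / (q : ℝ))}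
      ≤ 2 * (∑ i, (z i * b i) ^ ((2 : ℝ) / 3)) ^ (3 * (q : ℝ) / ((q : ℝ) + 2)) := by
  have hq3 : (2 : ℝ) < 3 * q := by
    have : (1 : ℝ) ≤ q := by exact_mod_cast hq
    linarith
  have hα := balancedWeights_pos (q := q) hz hb
  refine csInf_le ⟨0, ?_⟩ ⟨balancedWeights q z b, hα, ?_⟩
  · rintro _ ⟨α, hα, rfl⟩
    refine add_nonneg (sum_nonneg fun i _ => ?_) (rpow_nonneg (sum_nonneg fun i _ => ?_) _)
    · have := hz i; have := hα i; positivity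
    · have := hb i; have := hα i; positivity
  · simp only [← rpow_natCast, ← div_rpow (hz _).le (hα _).le, ← mul_rpow (hα _).le (hb _).le]
    rw [sum_div_balancedWeights_rpow hq3 hz hb, sum_balancedWeights_mul_rpow_rpow hq3 hz hb,
      two_mul]
end

section
/- Let A_1,…,A_q : D → [0,1] be Lipschitz functions on a normed space D such that for each i, A_i is τ̄_i-product-Lipschitz with respect to Π_{j≠i} A_j, meaning there exist c, C > 0 such that for all x and all ν with ‖ν‖ ≤ c, |A_i(x+ν) − A_i(x)|·Π_{j≠i}A_j(x) ≤ τ̄_i‖ν‖ + C‖ν‖². Then the pointwise product Π_{i=1}^q A_i is (2Σ_i τ̄_i)-Lipschitz on D. -/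
/-!
Telescoping `∏ Aᵢ(z + ν) - ∏ Aᵢ(z)` one factor at a time and comparing each partial product
with `∏_{j ≠ i} Aⱼ(z)` gives, for small `ν`, the local bound `(∑ τ̄ᵢ) ‖ν‖ + K ‖ν‖²`: the linear
part comes from the product-Lipschitz hypotheses, the quadratic part from the ordinary Lipschitz
constants. Cutting `[y, x]` into `n` equal steps yields `(∑ τ̄ᵢ) ‖x - y‖ + K ‖x - y‖² / n`,
and `n → ∞` shows that the product is even `(∑ τ̄ᵢ)`-Lipschitz.
-/

open Filter Topology Finset

theorem abs_prod_sub_prod_le {ι : Type*} [DecidableEq ι] {s : Finset ι} {f g : ι → ℝ}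
    (hf : ∀ i ∈ s, f i ∈ Set.Icc (0 : ℝ) 1) (hg : ∀ i ∈ s, g i ∈ Set.Icc (0 : ℝ) 1) :
    |∏ i ∈ s, f i - ∏ i ∈ s, g i| ≤
      ∑ i ∈ s, |f i - g i| * ∏ j ∈ s.erase i, g j + (∑ i ∈ s, |f i - g i|) ^ 2 := by
  induction s using Finset.induction_on with
  | empty => simp
  | insert a s ha ih =>
    have ih := ih (fun i hi => hf i (mem_insert_of_mem hi))
      (fun i hi => hg i (mem_insert_of_mem hi))
    obtain ⟨hfa0, hfa1⟩ := hf a (mem_insert_self a s)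
    set E := ∑ i ∈ s, |f i - g i| * ∏ j ∈ s.erase i, g j
    set S := ∑ i ∈ s, |f i - g i|
    have hE0 : 0 ≤ E := sum_nonneg fun i _ => mul_nonneg (abs_nonneg _)
      (prod_nonneg fun j hj => (hg j (mem_insert_of_mem (mem_of_mem_erase hj))).1)
    have hES : E ≤ S := sum_le_sum fun i _ => mul_le_of_le_one_right (abs_nonneg _)
      (prod_le_one (fun j hj => (hg j (mem_insert_of_mem (mem_of_mem_erase hj))).1)
        fun j hj => (hg j (mem_insert_of_mem (mem_of_mem_erase hj))).2)
    have hS0 : 0 ≤ S := sum_nonneg fun i _ => abs_nonneg _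
    have hErase : ∑ i ∈ s, |f i - g i| * ∏ j ∈ (insert a s).erase i, g j = g a * E := by
      rw [mul_sum]
      refine sum_congr rfl fun i hi => ?_
      have hai : a ≠ i := fun h => ha (h ▸ hi)
      rw [erase_insert_of_ne hai, prod_insert fun h => ha (mem_of_mem_erase h)]
      ring
    have hfa : f a ≤ g a + |f a - g a| := by linarith [le_abs_self (f a - g a)]
    have hsplit : |f a * ∏ i ∈ s, f i - g a * ∏ i ∈ s, g i| ≤
        f a * |∏ i ∈ s, f i - ∏ i ∈ s, g i| + |f a - g a| * ∏ i ∈ s, g i := by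
      calc |f a * ∏ i ∈ s, f i - g a * ∏ i ∈ s, g i|
          = |f a * (∏ i ∈ s, f i - ∏ i ∈ s, g i) + (f a - g a) * ∏ i ∈ s, g i| := by
            congr 1; ring
        _ ≤ _ := by
          refine (abs_add_le _ _).trans_eq ?_
          rw [abs_mul, abs_mul, abs_of_nonneg hfa0,
            abs_of_nonneg (prod_nonneg fun i hi => (hg i (mem_insert_of_mem hi)).1)]
    have hfaE : f a * (E + S ^ 2) ≤ g a * E + |f a - g a| * S + S ^ 2 := by
      nlinarith [mul_le_mul_of_nonneg_right hfa hE0, abs_nonneg (f a - g a),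
        mul_le_mul_of_nonneg_right hfa1 (sq_nonneg S)]
    rw [prod_insert ha, prod_insert ha, sum_insert ha, sum_insert ha, erase_insert ha, hErase]
    nlinarith [mul_le_mul_of_nonneg_left ih hfa0, abs_nonneg (f a - g a)]

theorem abs_prod_add_sub_prod_le {E ι : Type*} [SeminormedAddCommGroup E] [Fintype ι]
    [DecidableEq ι] {A : ι → E → ℝ} (h01 : ∀ i x, A i x ∈ Set.Icc (0 : ℝ) 1)
    {L : ι → NNReal} (hL : ∀ i, LipschitzWith (L i) (A i)) {τ C : ι → ℝ} {z ν : E}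
    (hτ : ∀ i, |A i (z + ν) - A i z| * ∏ j ∈ univ.erase i, A j z ≤ τ i * ‖ν‖ + C i * ‖ν‖ ^ 2) :
    |∏ i, A i (z + ν) - ∏ i, A i z| ≤
      (∑ i, τ i) * ‖ν‖ + (∑ i, C i + (∑ i, (L i : ℝ)) ^ 2) * ‖ν‖ ^ 2 := by
  have hdiff : ∀ i, |A i (z + ν) - A i z| ≤ L i * ‖ν‖ := fun i => by
    simpa [Real.dist_eq] using (hL i).dist_le_mul (z + ν) z
  have hS : ∑ i, |A i (z + ν) - A i z| ≤ (∑ i, (L i : ℝ)) * ‖ν‖ := by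
    rw [sum_mul]; exact sum_le_sum fun i _ => hdiff i
  have hS0 : 0 ≤ ∑ i, |A i (z + ν) - A i z| := sum_nonneg fun i _ => abs_nonneg _
  have hlin : ∑ i, |A i (z + ν) - A i z| * ∏ j ∈ univ.erase i, A j z ≤
      (∑ i, τ i) * ‖ν‖ + (∑ i, C i) * ‖ν‖ ^ 2 := by
    simpa only [sum_add_distrib, sum_mul] using sum_le_sum fun i (_ : i ∈ univ) => hτ i
  calc |∏ i, A i (z + ν) - ∏ i, A i z|
      ≤ ∑ i, |A i (z + ν) - A i z| * ∏ j ∈ univ.erase i, A j z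
        + (∑ i, |A i (z + ν) - A i z|) ^ 2 :=
        abs_prod_sub_prod_le (fun i _ => h01 i _) (fun i _ => h01 i _)
    _ ≤ (∑ i, τ i) * ‖ν‖ + (∑ i, C i) * ‖ν‖ ^ 2 + ((∑ i, (L i : ℝ)) * ‖ν‖) ^ 2 :=
        add_le_add hlin (pow_le_pow_left₀ hS0 hS 2)
    _ = _ := by ring

theorem norm_sub_le_nsmul_of_forall_norm_add_sub_le {M F : Type*} [AddMonoid M]
    [SeminormedAddCommGroup F] {f : M → F} {ν : M} {b : ℝ}
    (hb : ∀ z, ‖f (z + ν) - f z‖ ≤ b) (y : M) (n : ℕ) : ‖f (y + n • ν) - f y‖ ≤ n * b := by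
  induction n with
  | zero => simp
  | succ n ih =>
    calc ‖f (y + (n + 1) • ν) - f y‖
        ≤ ‖f (y + n • ν + ν) - f (y + n • ν)‖ + ‖f (y + n • ν) - f y‖ := by
          rw [succ_nsmul, ← add_assoc]; exact norm_sub_le_norm_sub_add_norm_sub _ _ _
      _ ≤ b + n * b := add_le_add (hb _) ih
      _ = (n + 1 : ℕ) * b := by push_cast; ring

theorem norm_sub_le_of_eventually_norm_add_sub_le {E F : Type*} [SeminormedAddCommGroup E]
    [NormedSpace ℝ E] [SeminormedAddCommGroup F] {f : E → F} {T K : ℝ}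
    (hf : ∀ᶠ ν in 𝓝 (0 : E), ∀ z, ‖f (z + ν) - f z‖ ≤ T * ‖ν‖ + K * ‖ν‖ ^ 2) (x y : E) :
    ‖f x - f y‖ ≤ T * ‖x - y‖ := by
  have hν : Tendsto (fun n : ℕ => (n : ℝ)⁻¹ • (x - y)) atTop (𝓝 0) := by
    simpa using (tendsto_inv_atTop_nhds_zero_nat (𝕜 := ℝ)).smul_const (x - y)
  have hlim : Tendsto (fun n : ℕ => T * ‖x - y‖ + K * ‖x - y‖ ^ 2 / n) atTop
      (𝓝 (T * ‖x - y‖)) := by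
    simpa using (tendsto_const_div_atTop_nhds_zero_nat (K * ‖x - y‖ ^ 2)).const_add (T * ‖x - y‖)
  refine ge_of_tendsto hlim ?_
  filter_upwards [hν.eventually hf, eventually_ne_atTop 0] with n hn hn0
  have hn' : (n : ℝ) ≠ 0 := Nat.cast_ne_zero.2 hn0
  have hnorm : ‖(n : ℝ)⁻¹ • (x - y)‖ = ‖x - y‖ / n := by
    rw [norm_smul, norm_inv, Real.norm_natCast, inv_mul_eq_div]
  have hend : y + n • ((n : ℝ)⁻¹ • (x - y)) = x := by
    rw [← Nat.cast_smul_eq_nsmul ℝ, smul_smul, mul_inv_cancel₀ hn', one_smul, add_sub_cancel]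
  calc ‖f x - f y‖ ≤ n * (T * (‖x - y‖ / n) + K * (‖x - y‖ / n) ^ 2) := by
        simpa only [hend, hnorm] using norm_sub_le_nsmul_of_forall_norm_add_sub_le hn y n
    _ = T * ‖x - y‖ + K * ‖x - y‖ ^ 2 / n := by field_simp

/-- If `A_1,…,A_q : D → [0,1]` are Lipschitz and each `A_i` is `τ̄_i`-product-Lipschitz with
respect to `Π_{j≠i} A_j` (i.e. `|A_i(x+ν) − A_i(x)|·Π_{j≠i}A_j(x) ≤ τ̄_i‖ν‖ + C‖ν‖²` for
`‖ν‖ ≤ c`), then the pointwise product `Π_i A_i` is `(2 Σ_i τ̄_i)`-Lipschitz. -/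
theorem product_lipschitz {D : Type*} [NormedAddCommGroup D] [NormedSpace ℝ D]
    {q : ℕ} (A : Fin q → D → ℝ)
    (h01 : ∀ i x, A i x ∈ Set.Icc (0 : ℝ) 1)
    (hLip : ∀ i, ∃ L : NNReal, LipschitzWith L (A i))
    (τ : Fin q → ℝ)
    (hPL : ∀ i, ∃ c C : ℝ, 0 < c ∧ 0 < C ∧ ∀ (x ν : D), ‖ν‖ ≤ c →
      |A i (x + ν) - A i x| * (∏ j ∈ Finset.univ.erase i, A j x) ≤
        τ i * ‖ν‖ + C * ‖ν‖ ^ 2) :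
    ∀ x y : D, |(∏ i, A i x) - ∏ i, A i y| ≤ (2 * ∑ i, τ i) * ‖x - y‖ := by
  intro x y
  choose L hL using hLip
  choose c C hc _ hPL using hPL
  have hlocal : ∀ᶠ ν in 𝓝 (0 : D), ∀ i z,
      |A i (z + ν) - A i z| * ∏ j ∈ univ.erase i, A j z ≤ τ i * ‖ν‖ + C i * ‖ν‖ ^ 2 :=
    eventually_all.2 fun i => by
      filter_upwards [Metric.closedBall_mem_nhds 0 (hc i)] with ν hν z
      exact hPL i z ν (mem_closedBall_zero_iff.1 hν)
  have hprod := norm_sub_le_of_eventually_norm_add_sub_le (f := fun z => ∏ i, A i z)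
    (hlocal.mono fun ν hν z => abs_prod_add_sub_prod_le h01 hL (hν · z)) x y
  rw [Real.norm_eq_abs] at hprod
  -- `hprod` forces `(∑ τ i) * ‖x - y‖ ≥ 0`, so doubling only weakens it.
  linarith [abs_nonneg (∏ i, A i x - ∏ i, A i y)]
end
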